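/- arXiv:1203.1893 — 9 statements merged into one kernel-verified Lean document; each statement's English description precedes it below -/
import Mathlib

section
/- In any associative ring, for all elements a, b, c, z the element [a, [b,c]z] + [b, [a,c]z] lies in L_3, the additive span of triple commutators [u, [v, w]]. Equivalently, the identity [a,[b,c]z] + [b,[a,c]z] = [[ab,c],z] - [[b,c],za] + [[b,[a,c]],z] - [[a,c],zb] holds. -/
/-- The commutator `[a,b] = a*b - b*a` in an associative ring. -/
def br {A : Type*} [Ring A] (a b : A) : A := a * b - b * a

section TripleCommutators

variable {A : Type*} [Ring A]

theorem br_swap (x y : A) : br x y = -br y x := by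
  simp only [br, neg_sub]

theorem br_br_mem_closure (x y w : A) :
    br x (br y w) ∈ AddSubgroup.closure {u : A | ∃ x y w : A, u = br x (br y w)} :=
  AddSubgroup.subset_closure ⟨x, y, w, rfl⟩

theorem br_br_left_mem_closure (x y w : A) :
    br (br x y) w ∈ AddSubgroup.closure {u : A | ∃ x y w : A, u = br x (br y w)} := by
  rw [br_swap]
  exact neg_mem (br_br_mem_closure w x y)

theorem br_br_mul_add_br_br_mul (a b c z : A) :
    br a (br b c * z) + br b (br a c * z) =
      br (br (a * b) c) z - br (br b c) (z * a) + br (br b (br a c)) z - br (br a c) (z * b) := by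
  simp only [br]
  noncomm_ring

end TripleCommutators

/-- In any associative ring, `[a,[b,c]z] + [b,[a,c]z]` lies in `L_3`, the additive span of
triple commutators, and equals `[[ab,c],z] - [[b,c],za] + [[b,[a,c]],z] - [[a,c],zb]`. -/
theorem stmt3 (A : Type*) [Ring A] (a b c z : A) :
    br a (br b c * z) + br b (br a c * z) ∈
      AddSubgroup.closure {u : A | ∃ x y w : A, u = br x (br y w)} ∧
    br a (br b c * z) + br b (br a c * z) =
      br (br (a * b) c) z - br (br b c) (z * a) + br (br b (br a c)) z - br (br a c) (z * b) := by
  refine ⟨?_, br_br_mul_add_br_br_mul a b c z⟩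
  rw [br_br_mul_add_br_br_mul]
  exact sub_mem (add_mem (sub_mem (br_br_left_mem_closure _ _ _) (br_br_left_mem_closure _ _ _))
    (br_br_left_mem_closure _ _ _)) (br_br_left_mem_closure _ _ _)
end

section
/- In any associative ring, for all elements x, y, z the element [x,y][x,z] lies in M_3 = A·L_3, where L_3 is the additive span of triple commutators. Specifically, [x,y][x,z] = [[x,yx],z] - [[x,y],z]x. -/
section TripleCommutatorSpan

variable {A : Type*} [Ring A]

lemma br_anticomm (a b : A) : br a b = -br b a := by
  simp only [br, neg_sub]

lemma mul_eq_mul_sub_br (a b : A) : a * b = b * a - br b a := by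
  simp only [br, sub_sub_cancel]

lemma br_mul_br_eq (x y z : A) :
    br x y * br x z = br (br x (y * x)) z - br (br x y) z * x := by
  simp only [br]; noncomm_ring

variable (A) in
def tripleCommutatorSpan : AddSubgroup A :=
  AddSubgroup.closure
    ({u : A | ∃ a p q r : A, u = a * br p (br q r)} ∪ {u : A | ∃ p q r : A, u = br p (br q r)})

lemma br_br_mem_tripleCommutatorSpan (p q r : A) :
    br p (br q r) ∈ tripleCommutatorSpan A :=
  AddSubgroup.subset_closure (Or.inr ⟨p, q, r, rfl⟩)

lemma mul_br_br_mem_tripleCommutatorSpan (a p q r : A) :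
    a * br p (br q r) ∈ tripleCommutatorSpan A :=
  AddSubgroup.subset_closure (Or.inl ⟨a, p, q, r, rfl⟩)

lemma br_br_left_mem_tripleCommutatorSpan (p q r : A) :
    br (br p q) r ∈ tripleCommutatorSpan A := by
  rw [br_anticomm]
  exact neg_mem (br_br_mem_tripleCommutatorSpan r p q)

lemma br_br_left_mul_mem_tripleCommutatorSpan (p q r a : A) :
    br (br p q) r * a ∈ tripleCommutatorSpan A := by
  rw [mul_eq_mul_sub_br]
  refine sub_mem ?_ (br_br_mem_tripleCommutatorSpan a (br p q) r)
  rw [br_anticomm, mul_neg]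
  exact neg_mem (mul_br_br_mem_tripleCommutatorSpan a r p q)

end TripleCommutatorSpan

/-- In any associative ring `A`, `[x,y][x,z] = [[x,yx],z] - [[x,y],z]x`, and in particular
`[x,y][x,z]` lies in `M_3 = A·L_3`, the additive span of (left multiples of) triple
commutators. -/
theorem stmt4 (A : Type*) [Ring A] (x y z : A) :
    br x y * br x z = br (br x (y * x)) z - br (br x y) z * x ∧
    br x y * br x z ∈
      AddSubgroup.closure
        ({u : A | ∃ a p q r : A, u = a * br p (br q r)} ∪
         {u : A | ∃ p q r : A, u = br p (br q r)}) := by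
  refine ⟨br_mul_br_eq x y z, ?_⟩
  show br x y * br x z ∈ tripleCommutatorSpan A
  rw [br_mul_br_eq]
  exact sub_mem (br_br_left_mem_tripleCommutatorSpan x (y * x) z)
    (br_br_left_mul_mem_tripleCommutatorSpan x y z x)
end

section
/- In any associative ring, for all elements x, y, z, t, the element [x,y][z,t] + [x,z][y,t] is congruent modulo M_3 to [x, y[z,t] + z[y,t]] = [x,[yz,t]] + [x, z[y,t] - [y,t]z], which lies in L_3. -/
/-- In any associative ring, `[x,y][z,t] + [x,z][y,t]` is congruent modulo `M_3 = A·L_3` to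
`[x, y[z,t] + z[y,t]] = [x,[yz,t]] + [x, z[y,t] - [y,t]z]`, which lies in `L_3`. -/
theorem stmt5 (A : Type*) [Ring A] (x y z t : A) :
    ((br x y * br z t + br x z * br y t) - br x (y * br z t + z * br y t) ∈
      AddSubgroup.closure
        ({u : A | ∃ a p q r : A, u = a * br p (br q r)} ∪
         {u : A | ∃ p q r : A, u = br p (br q r)})) ∧
    br x (y * br z t + z * br y t) =
      br x (br (y * z) t) + br x (z * br y t - br y t * z) ∧
    br x (br (y * z) t) + br x (z * br y t - br y t * z) ∈
      AddSubgroup.closure {u : A | ∃ p q r : A, u = br p (br q r)} := by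
  refine ⟨?_, ?_, ?_⟩
  · have h : (br x y * br z t + br x z * br y t) - br x (y * br z t + z * br y t)
        = (-y) * br x (br z t) + (-z) * br x (br y t) := by
      simp only [br]; noncomm_ring
    rw [h]
    exact AddSubgroup.add_mem _
      (AddSubgroup.subset_closure (Or.inl ⟨-y, x, z, t, rfl⟩))
      (AddSubgroup.subset_closure (Or.inl ⟨-z, x, y, t, rfl⟩))
  · simp only [br]; noncomm_ring
  · have h2 : br x (z * br y t - br y t * z) = br x (br z (br y t)) := by
      simp only [br]
    rw [h2]
    exact AddSubgroup.add_mem _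
      (AddSubgroup.subset_closure ⟨x, y * z, t, rfl⟩)
      (AddSubgroup.subset_closure ⟨x, z, br y t, rfl⟩)
end

section
/- Let Z^N ⊇ A ⊇ B be abelian groups, p a prime, and suppose the quotient Z^N / A has no p-torsion. Let A_p and B_p denote the images of A and B in F_p^N = Z^N ⊗ F_p. Then the natural map A_p / B_p → (A/B) ⊗ F_p is an isomorphism. -/
/-!
Reduction mod `p` induces a surjection `Q := A/B → A_p/B_p`, and its kernel is exactly `p • Q`:
if `a ∈ A` reduces into `B_p`, then `a - b = p • w` for some `b ∈ B`, and `w ∈ A` because `ℤ^N/A`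
has no `p`-torsion, so `a ≡ p • w` modulo `B`. Hence `A_p/B_p ≅ Q/pQ ≅ Q ⊗ ℤ/p`.
-/

/-- Componentwise reduction `ℤ^N → (ℤ/p)^N`. -/
def redMap (N p : ℕ) : (Fin N → ℤ) →+ (Fin N → ZMod p) where
  toFun v i := (v i : ZMod p)
  map_zero' := by funext i; simp
  map_add' a b := by funext i; simp

open TensorProduct

namespace LinearMap

variable {Q M : Type*} [AddCommGroup Q] [AddCommGroup M]

/- Returned as an `AddEquiv` only: the `ℤ`-module structure that `lTensor` puts on `Q ⊗[ℤ] ZMod p`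
is not reducibly the one `AddCommGroup.toIntModule` gives, which makes the `LinearEquiv` awkward. -/
noncomputable def equivTensorZModOfKer (p : ℕ) (f : Q →ₗ[ℤ] M) (hf : Function.Surjective f)
    (hker : ∀ q, f q = 0 ↔ ∃ x, p • x = q) : M ≃+ Q ⊗[ℤ] ZMod p :=
  have hker' : ker f = Ideal.span {(p : ℤ)} • ⊤ := by
    ext q
    rw [Submodule.ideal_span_singleton_smul, Submodule.mem_smul_pointwise_iff_exists]
    simp only [Submodule.mem_top, true_and, natCast_zsmul]
    exact hker q
  ((f.quotKerEquivOfSurjective hf).symm ≪≫ₗ Submodule.quotEquivOfEq _ _ hker' ≪≫ₗ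
    (tensorQuotEquivQuotSMul Q _).symm ≪≫ₗ
    (Int.quotientSpanNatEquivZMod p).toIntAlgEquiv.toLinearEquiv.lTensor Q).toAddEquiv

theorem equivTensorZModOfKer_apply (p : ℕ) (f : Q →ₗ[ℤ] M) (hf : Function.Surjective f)
    (hker : ∀ q, f q = 0 ↔ ∃ x, p • x = q) (q : Q) :
    equivTensorZModOfKer p f hf hker (f q) = q ⊗ₜ 1 := by
  simp [equivTensorZModOfKer]

end LinearMap

theorem redMap_eq_zero_iff {N p : ℕ} (v : Fin N → ℤ) :
    redMap N p v = 0 ↔ ∃ w, p • w = v := by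
  constructor
  · intro hv
    have hdvd (i : Fin N) : (p : ℤ) ∣ v i :=
      (ZMod.intCast_zmod_eq_zero_iff_dvd _ _).1 (congrFun hv i)
    exact ⟨fun i => v i / p, funext fun i => by simp [Int.mul_ediv_cancel' (hdvd i)]⟩
  · rintro ⟨w, rfl⟩
    funext i
    simp [redMap]

theorem redMap_mem_map_iff {N p : ℕ} {A B : AddSubgroup (Fin N → ℤ)} (hBA : B ≤ A)
    (htf : ∀ v : Fin N → ℤ, (p : ℤ) • v ∈ A → v ∈ A) {a : Fin N → ℤ} (ha : a ∈ A) :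
    redMap N p a ∈ B.map (redMap N p) ↔ ∃ w ∈ A, a - p • w ∈ B := by
  constructor
  · rintro ⟨b, hb, hba⟩
    obtain ⟨w, hw⟩ := (redMap_eq_zero_iff (p := p) (a - b)).1 (by rw [map_sub, hba, sub_self])
    refine ⟨w, htf w ?_, ?_⟩
    · rw [natCast_zsmul, hw]
      exact sub_mem ha (hBA hb)
    · rwa [hw, sub_sub_cancel]
  · rintro ⟨w, -, hw⟩
    refine ⟨a - p • w, hw, ?_⟩
    rw [map_sub, (redMap_eq_zero_iff (p • w)).2 ⟨w, rfl⟩, sub_zero]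

section Reduction

variable (N p : ℕ) (A B : AddSubgroup (Fin N → ℤ))

def redMapQuotient :
    ↥A ⧸ B.addSubgroupOf A →+
      ↥(A.map (redMap N p)) ⧸ (B.map (redMap N p)).addSubgroupOf (A.map (redMap N p)) :=
  QuotientAddGroup.map _ _ ((redMap N p).addSubgroupMap A) fun _ hb =>
    AddSubgroup.mem_map_of_mem _ hb

variable {N p A B}

theorem redMapQuotient_surjective : Function.Surjective (redMapQuotient N p A B) :=
  QuotientAddGroup.map_surjective_of_surjective _ _ _
    ((QuotientAddGroup.mk'_surjective _).comp ((redMap N p).addSubgroupMap_surjective A)) _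

theorem redMapQuotient_eq_zero_iff (hBA : B ≤ A)
    (htf : ∀ v : Fin N → ℤ, (p : ℤ) • v ∈ A → v ∈ A) (q : ↥A ⧸ B.addSubgroupOf A) :
    redMapQuotient N p A B q = 0 ↔ ∃ x, p • x = q := by
  induction q using QuotientAddGroup.induction_on with
  | H a =>
    have hsmul (w : ↥A) : p • (w : ↥A ⧸ B.addSubgroupOf A) = a ↔ (a : Fin N → ℤ) - p • w ∈ B := by
      rw [← QuotientAddGroup.mk_nsmul, eq_comm, QuotientAddGroup.eq_iff_sub_mem]
      rfl
    rw [show redMapQuotient N p A B a = 0 ↔ redMap N p a ∈ B.map (redMap N p) from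
      QuotientAddGroup.eq_zero_iff _, redMap_mem_map_iff hBA htf a.2]
    constructor
    · rintro ⟨w, hw, hB⟩
      exact ⟨(⟨w, hw⟩ : ↥A), (hsmul ⟨w, hw⟩).2 hB⟩
    · rintro ⟨x, hx⟩
      induction x using QuotientAddGroup.induction_on with
      | H w => exact ⟨w, w.2, (hsmul w).1 hx⟩

end Reduction

theorem stmt8_general (N p : ℕ) (A B : AddSubgroup (Fin N → ℤ)) (hBA : B ≤ A)
    (htf : ∀ v : Fin N → ℤ, (p : ℤ) • v ∈ A → v ∈ A) :
    ∃ e : (↥(A.map (redMap N p)) ⧸ (B.map (redMap N p)).addSubgroupOf (A.map (redMap N p))) ≃+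
        TensorProduct ℤ (↥A ⧸ B.addSubgroupOf A) (ZMod p),
      ∀ a : ↥A,
        e (QuotientAddGroup.mk ⟨redMap N p a, AddSubgroup.mem_map_of_mem _ a.2⟩) =
          TensorProduct.tmul ℤ
            (QuotientAddGroup.mk a : ↥A ⧸ B.addSubgroupOf A) (1 : ZMod p) :=
  ⟨LinearMap.equivTensorZModOfKer p (redMapQuotient N p A B).toIntLinearMap
      redMapQuotient_surjective (redMapQuotient_eq_zero_iff hBA htf),
    fun a => LinearMap.equivTensorZModOfKer_apply _ _ _ _ (QuotientAddGroup.mk a)⟩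

/-- Let `ℤ^N ⊇ A ⊇ B` be abelian groups, `p` prime, and suppose `ℤ^N/A` has no
`p`-torsion.  Then the natural map `A_p/B_p → (A/B) ⊗ F_p` (sending the class of
`a mod p` to the class of `a ⊗ 1`) is an isomorphism, where `A_p`, `B_p` are the images
of `A`, `B` in `F_p^N`. -/
theorem stmt8 (N p : ℕ) (hp : p.Prime) (A B : AddSubgroup (Fin N → ℤ)) (hBA : B ≤ A)
    (htf : ∀ v : Fin N → ℤ, (p : ℤ) • v ∈ A → v ∈ A) :
    ∃ e : (↥(A.map (redMap N p)) ⧸ (B.map (redMap N p)).addSubgroupOf (A.map (redMap N p))) ≃+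
        TensorProduct ℤ (↥A ⧸ B.addSubgroupOf A) (ZMod p),
      ∀ a : ↥A,
        e (QuotientAddGroup.mk ⟨redMap N p a, AddSubgroup.mem_map_of_mem _ a.2⟩) =
          TensorProduct.tmul ℤ
            (QuotientAddGroup.mk a : ↥A ⧸ B.addSubgroupOf A) (1 : ZMod p) :=
  stmt8_general N p A B hBA htf
end

section
/- In the free associative ring A_2 = Z⟨x,y⟩ on two generators, let q, r be positive integers, d = gcd(q,r). Define f̂ = sum_{i=0}^{q/d - 1} x^i y^{r/d} (x^{q/d} y^{r/d})^{d-1} x^{q/d - 1 - i} and ĝ = sum_{i=0}^{r/d - 1} y^i (x^{q/d} y^{r/d})^{d-1} x^{q/d} y^{r/d - 1 - i}. Then [x, f̂] + [y, ĝ] = 0 in A_2. -/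
open Finset

/-- The terms telescope: `a · aⁱ c aⁿ⁻¹⁻ⁱ - aⁱ c aⁿ⁻¹⁻ⁱ · a = aⁱ⁺¹ c aⁿ⁻⁽ⁱ⁺¹⁾ - aⁱ c aⁿ⁻ⁱ`. -/
theorem mul_sum_pow_mul_pow_sub_sum_mul {R : Type*} [Ring R] (a c : R) (n : ℕ) :
    a * (∑ i ∈ range n, a ^ i * c * a ^ (n - 1 - i))
      - (∑ i ∈ range n, a ^ i * c * a ^ (n - 1 - i)) * a = a ^ n * c - c * a ^ n := by
  have hterm : ∀ i ∈ range n, a * (a ^ i * c * a ^ (n - 1 - i)) - a ^ i * c * a ^ (n - 1 - i) * a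
      = a ^ (i + 1) * c * a ^ (n - (i + 1)) - a ^ i * c * a ^ (n - i) := by
    intro i hi
    have hi : i < n := mem_range.mp hi
    rw [show n - 1 - i = n - (i + 1) by omega, mul_assoc _ _ a, ← pow_succ,
      show n - (i + 1) + 1 = n - i by omega, pow_succ', mul_assoc a, mul_assoc a]
  rw [mul_sum, sum_mul, ← sum_sub_distrib, sum_congr rfl hterm,
    sum_range_sub (fun i => a ^ i * c * a ^ (n - i))]
  simp

theorem stmt9_general (q r : ℕ) :
    let d := Nat.gcd q r
    let x := FreeAlgebra.ι ℤ (0 : Fin 2)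
    let y := FreeAlgebra.ι ℤ (1 : Fin 2)
    let f := ∑ i ∈ Finset.range (q / d),
      x ^ i * y ^ (r / d) * (x ^ (q / d) * y ^ (r / d)) ^ (d - 1) * x ^ (q / d - 1 - i)
    let g := ∑ i ∈ Finset.range (r / d),
      y ^ i * (x ^ (q / d) * y ^ (r / d)) ^ (d - 1) * x ^ (q / d) * y ^ (r / d - 1 - i)
    (x * f - f * x) + (y * g - g * y) = 0 := by
  intro d x y f g
  set m := x ^ (q / d) * y ^ (r / d)
  have hf := mul_sum_pow_mul_pow_sub_sum_mul x (y ^ (r / d) * m ^ (d - 1)) (q / d)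
  have hg := mul_sum_pow_mul_pow_sub_sum_mul y (m ^ (d - 1) * x ^ (q / d)) (r / d)
  simp only [← mul_assoc] at hf hg
  rw [hf, hg]
  -- both remaining words are `m ^ (d - 1)` multiplied by `m` on either side
  have hcomm : m * m ^ (d - 1) = m ^ (d - 1) * m := (pow_mul_comm' m (d - 1)).symm
  simp only [m, mul_assoc] at hcomm ⊢
  rw [hcomm]
  abel

/-- In the free associative ring `ℤ⟨x,y⟩`, with `d = gcd(q,r)`,
`f̂ = ∑_{i<q/d} x^i y^{r/d} (x^{q/d} y^{r/d})^{d-1} x^{q/d-1-i}` and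
`ĝ = ∑_{i<r/d} y^i (x^{q/d} y^{r/d})^{d-1} x^{q/d} y^{r/d-1-i}` satisfy
`[x, f̂] + [y, ĝ] = 0`. -/
theorem stmt9 (q r : ℕ) (hq : 0 < q) (hr : 0 < r) :
    let d := Nat.gcd q r
    let x := FreeAlgebra.ι ℤ (0 : Fin 2)
    let y := FreeAlgebra.ι ℤ (1 : Fin 2)
    let f := ∑ i ∈ Finset.range (q / d),
      x ^ i * y ^ (r / d) * (x ^ (q / d) * y ^ (r / d)) ^ (d - 1) * x ^ (q / d - 1 - i)
    let g := ∑ i ∈ Finset.range (r / d),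
      y ^ i * (x ^ (q / d) * y ^ (r / d)) ^ (d - 1) * x ^ (q / d) * y ^ (r / d - 1 - i)
    (x * f - f * x) + (y * g - g * y) = 0 :=
  stmt9_general q r
end

section
/- In the free associative ring A_n = Z⟨x_1,...,x_n⟩, let m_1, ..., m_n be positive integers, d = gcd(m_1,...,m_n). For each i define f̂_i = sum_{j=0}^{m_i/d - 1} x_i^j x_{i+1}^{m_{i+1}/d} ⋯ x_n^{m_n/d} (x_1^{m_1/d} ⋯ x_n^{m_n/d})^{d-1} x_1^{m_1/d} ⋯ x_{i-1}^{m_{i-1}/d} x_i^{m_i/d - j - 1}. Then sum_{i=1}^n [x_i, f̂_i] = 0. -/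
/-!
Write `p_i = x_i^(m_i/d)`, `P = p_1 ⋯ p_n` and `c_i = (p_{i+1} ⋯ p_n) P^(d-1) (p_1 ⋯ p_{i-1})`,
so that `f̂_i = ∑_j x_i^j c_i x_i^(m_i/d-j-1)`. The noncommutative geometric sum identity gives
`[x_i, f̂_i] = p_i c_i - c_i p_i`, and these differences telescope:
`p_i c_i = (p_i ⋯ p_n) P^(d-1) (p_1 ⋯ p_{i-1})` and
`c_i p_i = (p_{i+1} ⋯ p_n) P^(d-1) (p_1 ⋯ p_i)`.
The whole sum is therefore `P P^(d-1) - P^(d-1) P = 0`.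
-/

open Finset

namespace List

theorem mem_take_finRange {n k : ℕ} {a : Fin n} : a ∈ (finRange n).take k ↔ a.val < k := by
  simp only [mem_take_iff_getElem, length_finRange, lt_min_iff, getElem_finRange]
  constructor
  · rintro ⟨j, h, rfl⟩
    exact h.1
  · exact fun h => ⟨a, ⟨h, a.2⟩, rfl⟩

theorem mem_drop_finRange {n k : ℕ} {a : Fin n} : a ∈ (finRange n).drop k ↔ k ≤ a.val := by
  simp only [mem_drop_iff_getElem, length_finRange, getElem_finRange]
  constructor
  · rintro ⟨j, h, rfl⟩
    simp
  · exact fun h => ⟨a - k, by omega, Fin.ext (by simp; omega)⟩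

theorem filter_finRange_lt {n : ℕ} (i : Fin n) :
    (finRange n).filter (fun l => l < i) = (finRange n).take i := by
  conv_lhs => rw [← take_append_drop i (finRange n)]
  have h_take : ((finRange n).take i).filter (fun l => l < i) = (finRange n).take i :=
    filter_eq_self.2 fun a ha => decide_eq_true (mem_take_finRange.1 ha)
  have h_drop : ((finRange n).drop i).filter (fun l => l < i) = [] :=
    filter_eq_nil_iff.2 fun a ha => by
      rw [decide_eq_true_iff, not_lt]
      exact mem_drop_finRange.1 ha
  rw [filter_append, h_take, h_drop, append_nil]

theorem filter_finRange_gt {n : ℕ} (i : Fin n) :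
    (finRange n).filter (fun l => i < l) = (finRange n).drop (i + 1) := by
  conv_lhs => rw [← take_append_drop (i + 1) (finRange n)]
  have h_take : ((finRange n).take (i + 1)).filter (fun l => i < l) = [] :=
    filter_eq_nil_iff.2 fun a ha => by
      rw [decide_eq_true_iff, not_lt]
      exact Nat.lt_succ_iff.1 (mem_take_finRange.1 ha)
  have h_drop : ((finRange n).drop (i + 1)).filter (fun l => i < l) = (finRange n).drop (i + 1) :=
    filter_eq_self.2 fun a ha => decide_eq_true (mem_drop_finRange.1 ha)
  rw [filter_append, h_take, h_drop, nil_append]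

theorem drop_finRange_eq_cons {n : ℕ} (i : Fin n) :
    (finRange n).drop i = i :: (finRange n).drop (i + 1) := by
  rw [drop_eq_getElem_cons (by simp)]
  simp

theorem take_finRange_succ {n : ℕ} (i : Fin n) :
    (finRange n).take (i + 1) = (finRange n).take i ++ [i] := by
  rw [take_add_one, getElem?_eq_getElem (by simp)]
  simp

end List

theorem mul_sum_pow_mul_pow_sub_sum_pow_mul_pow_mul {A : Type*} [Ring A] (a c : A) (k : ℕ) :
    a * (∑ j ∈ range k, a ^ j * c * a ^ (k - j - 1)) -
      (∑ j ∈ range k, a ^ j * c * a ^ (k - j - 1)) * a = a ^ k * c - c * a ^ k := by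
  -- `mulLeft a` and `mulRight a` commute in `Module.End ℤ A`; apply `Commute.mul_geom_sum₂` there.
  have := LinearMap.congr_fun ((LinearMap.commute_mulLeft_right (R := ℤ) a a).mul_geom_sum₂ k) c
  simpa [Finset.mul_sum, Finset.sum_mul, Nat.sub_sub, Nat.add_comm 1, mul_assoc] using this

theorem sum_mul_sub_mul_prod_filter_finRange {A : Type*} [Ring A] {n : ℕ} (p : Fin n → A)
    (q : A) :
    ∑ i : Fin n, (p i * ((((List.finRange n).filter (fun l => i < l)).map p).prod * q *
        (((List.finRange n).filter (fun l => l < i)).map p).prod) -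
      (((List.finRange n).filter (fun l => i < l)).map p).prod * q *
        (((List.finRange n).filter (fun l => l < i)).map p).prod * p i) =
      ((List.finRange n).map p).prod * q - q * ((List.finRange n).map p).prod := by
  set D : ℕ → A := fun t => (((List.finRange n).drop t).map p).prod with hD
  set T : ℕ → A := fun t => (((List.finRange n).take t).map p).prod with hT
  calc _ = ∑ t ∈ range n, (D t * q * T t - D (t + 1) * q * T (t + 1)) := by
        rw [← Fin.sum_univ_eq_sum_range]
        refine Finset.sum_congr rfl fun i _ => ?_
        simp only [hD, hT, List.filter_finRange_gt, List.filter_finRange_lt,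
          List.drop_finRange_eq_cons i, List.take_finRange_succ, List.map_cons, List.map_append,
          List.map_nil, List.prod_cons, List.prod_append, List.prod_nil, mul_one, mul_assoc]
    _ = _ := by
        rw [Finset.sum_range_sub']
        simp only [hD, hT, List.drop_zero, List.take_zero,
          List.drop_eq_nil_of_le List.length_finRange.le,
          List.take_of_length_le List.length_finRange.le,
          List.map_nil, List.prod_nil, mul_one, one_mul]

theorem stmt10_general (n : ℕ) (m : Fin n → ℕ) :
    let d := Finset.univ.gcd m
    let x : Fin n → FreeAlgebra ℤ (Fin n) := FreeAlgebra.ι ℤ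
    let P := ((List.finRange n).map (fun l => x l ^ (m l / d))).prod
    let f : Fin n → FreeAlgebra ℤ (Fin n) := fun i => ∑ j ∈ Finset.range (m i / d),
      x i ^ j *
        (((List.finRange n).filter (fun l => i < l)).map (fun l => x l ^ (m l / d))).prod *
        P ^ (d - 1) *
        (((List.finRange n).filter (fun l => l < i)).map (fun l => x l ^ (m l / d))).prod *
        x i ^ (m i / d - j - 1)
    ∑ i : Fin n, (x i * f i - f i * x i) = 0 := by
  intro d x P f
  have h_block : ∀ i, x i * f i - f i * x i = x i ^ (m i / d) *
      ((((List.finRange n).filter (fun l => i < l)).map (fun l => x l ^ (m l / d))).prod * P ^ (d - 1) *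
        (((List.finRange n).filter (fun l => l < i)).map (fun l => x l ^ (m l / d))).prod) -
      (((List.finRange n).filter (fun l => i < l)).map (fun l => x l ^ (m l / d))).prod * P ^ (d - 1) *
        (((List.finRange n).filter (fun l => l < i)).map (fun l => x l ^ (m l / d))).prod *
        x i ^ (m i / d) := fun i => by
    rw [← mul_sum_pow_mul_pow_sub_sum_pow_mul_pow_mul]
    simp only [f, mul_assoc]
  rw [Finset.sum_congr rfl fun i _ => h_block i,
    sum_mul_sub_mul_prod_filter_finRange (fun l => x l ^ (m l / d)), sub_eq_zero]
  exact (Commute.self_pow P (d - 1)).eq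

/-- In the free associative ring `ℤ⟨x_1,...,x_n⟩`, with `d = gcd(m_1,...,m_n)` and
`f̂_i = ∑_{j<m_i/d} x_i^j (∏_{l>i} x_l^{m_l/d}) (∏_l x_l^{m_l/d})^{d-1}
(∏_{l<i} x_l^{m_l/d}) x_i^{m_i/d-j-1}`, one has `∑_i [x_i, f̂_i] = 0`. -/
theorem stmt10 (n : ℕ) (m : Fin n → ℕ) (hm : ∀ i, 0 < m i) :
    let d := Finset.univ.gcd m
    let x : Fin n → FreeAlgebra ℤ (Fin n) := FreeAlgebra.ι ℤ
    let P := ((List.finRange n).map (fun l => x l ^ (m l / d))).prod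
    let f : Fin n → FreeAlgebra ℤ (Fin n) := fun i => ∑ j ∈ Finset.range (m i / d),
      x i ^ j *
        (((List.finRange n).filter (fun l => i < l)).map (fun l => x l ^ (m l / d))).prod *
        P ^ (d - 1) *
        (((List.finRange n).filter (fun l => l < i)).map (fun l => x l ^ (m l / d))).prod *
        x i ^ (m i / d - j - 1)
    ∑ i : Fin n, (x i * f i - f i * x i) = 0 :=
  stmt10_general n m
end

section
/- Let y_1, ..., y_n be generators of an exterior algebra over Z (y_i y_j = -y_j y_i, y_i^2 = 0). Let j_1, ..., j_M be a sequence of indices from {1,...,n}, and let m_i be the number of occurrences of i in the sequence. Then (1 + y_{j_1})(1 + y_{j_2})⋯(1 + y_{j_M}) = (1 + m_1 y_1 + ... + m_n y_n) · prod_{1 ≤ r < s ≤ M} (1 + y_{j_r} y_{j_s}). -/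
/-!
For square-zero anticommuting `a, b` one has `(1 + a)(1 + b) = (1 + (a + b))(1 + ab)`.
Applied with `a = ι v₁` and `b = ι (v₂ + ⋯ + v_M)`, it lets an induction on the list merge the
factors `1 + ι vₖ` one at a time into `1 + ι (∑ₖ vₖ)`, at the cost of the factor
`1 + ι v₁ ι (∑_{s > 1} v_s)`, which equals `∏_{s > 1} (1 + ι v₁ ι v_s)` because the products
`ι v₁ ι v_s · ι v₁ ι v_t` vanish. With `vₖ = y_{jₖ}` the sum `∑ₖ vₖ` is `∑ᵢ mᵢ yᵢ`.
-/

open ExteriorAlgebra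

theorem one_add_mul_one_add_of_sq_eq_zero {A : Type*} [Ring A] {a b : A}
    (ha : a * a = 0) (hb : b * b = 0) (hba : b * a = -(a * b)) :
    (1 + a) * (1 + b) = (1 + (a + b)) * (1 + a * b) := by
  have haab : a * (a * b) = 0 := by rw [← mul_assoc, ha, zero_mul]
  have hbab : b * (a * b) = 0 := by
    rw [← mul_assoc, hba, neg_mul, mul_assoc, hb, mul_zero, neg_zero]
  simp only [mul_add, add_mul, one_mul, mul_one, haab, hbab, add_zero]
  abel

section ExteriorAlgebra

variable {R M : Type*} [CommRing R] [AddCommGroup M] [Module R M]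

theorem ExteriorAlgebra.ι_mul_ι_eq_neg (v w : M) : ι R v * ι R w = -(ι R w * ι R v) :=
  eq_neg_of_add_eq_zero_left (ι_add_mul_swap v w)

theorem ExteriorAlgebra.list_prod_one_add_ι_mul_ι (w : M) (t : List M) :
    (t.map fun v => 1 + ι R w * ι R v).prod = 1 + ι R w * ι R t.sum := by
  induction t with
  | nil => simp
  | cons v t ih =>
    have hvanish : ι R w * ι R v * (ι R w * ι R t.sum) = 0 := by
      rw [mul_assoc, ← mul_assoc (ι R v), ι_mul_ι_eq_neg v w, neg_mul, mul_neg, ← mul_assoc,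
        ← mul_assoc, ι_sq_zero, zero_mul, zero_mul, neg_zero]
    rw [List.map_cons, List.prod_cons, ih, List.sum_cons, map_add]
    simp only [mul_add, add_mul, one_mul, mul_one, hvanish, add_zero]
    abel

theorem ExteriorAlgebra.list_prod_one_add_ι {α : Type*} [LinearOrder α] (v : α → M)
    {K : List α} (hK : K.Pairwise (· < ·)) :
    (K.map fun k => 1 + ι R (v k)).prod =
      (1 + ι R (K.map v).sum) *
        (K.map fun r => ((K.filter (r < ·)).map fun s => 1 + ι R (v r) * ι R (v s)).prod).prod := by
  induction K with
  | nil => simp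
  | cons r K ih =>
    obtain ⟨hr, hK⟩ := List.pairwise_cons.mp hK
    have hfilter_r : (r :: K).filter (r < ·) = K := by
      rw [List.filter_cons_of_neg (by simp), List.filter_eq_self.mpr]
      exact fun s hs => by simpa using hr s hs
    have hfilter : ∀ a ∈ K, (r :: K).filter (a < ·) = K.filter (a < ·) := fun a ha =>
      List.filter_cons_of_neg (by simpa using (hr a ha).asymm)
    have hhead : (((r :: K).filter (r < ·)).map fun s => 1 + ι R (v r) * ι R (v s)).prod =
        1 + ι R (v r) * ι R (K.map v).sum := by
      rw [hfilter_r, ← list_prod_one_add_ι_mul_ι, List.map_map]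
      rfl
    rw [List.map_cons, List.prod_cons, ih hK, ← mul_assoc,
      one_add_mul_one_add_of_sq_eq_zero (ι_sq_zero _) (ι_sq_zero _) (ι_mul_ι_eq_neg _ _),
      List.map_cons, List.map_cons, List.prod_cons, List.sum_cons, map_add, hhead, mul_assoc]
    congr 3
    exact List.map_congr_left fun a ha => by rw [hfilter a ha]

end ExteriorAlgebra

theorem Finset.sum_comp_eq_sum_card_fiber_nsmul {α β N : Type*} [Fintype α] [Fintype β]
    [DecidableEq β] [AddCommMonoid N] (j : α → β) (y : β → N) :
    ∑ k, y (j k) = ∑ i, (univ.filter fun k => j k = i).card • y i := by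
  simp only [← Finset.sum_fiberwise' univ j y, Finset.sum_const]

/-- In the exterior algebra over `ℤ` on anticommuting generators `y_1,...,y_n`, for any
sequence of indices `j_1,...,j_M` with `m_i` occurrences of `i`,
`(1+y_{j_1})⋯(1+y_{j_M}) = (1 + m_1 y_1 + ... + m_n y_n) · ∏_{r<s} (1 + y_{j_r} y_{j_s})`
(the latter product taken in any fixed order, its factors being even, hence commuting). -/
theorem stmt11 (n M : ℕ) (j : Fin M → Fin n) :
    let y : Fin n → ExteriorAlgebra ℤ (Fin n → ℤ) :=
      fun i => ExteriorAlgebra.ι ℤ (Pi.single i 1)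
    ((List.finRange M).map (fun k => 1 + y (j k))).prod =
      (1 + ∑ i : Fin n, ((Finset.univ.filter (fun k => j k = i)).card) • y i) *
        ((List.finRange M).map (fun r =>
          (((List.finRange M).filter (fun s => r < s)).map
            (fun s => 1 + y (j r) * y (j s))).prod)).prod := by
  intro y
  have hsum : ∑ i, (Finset.univ.filter fun k => j k = i).card • y i =
      ι ℤ ((List.finRange M).map fun k => (Pi.single (j k) 1 : Fin n → ℤ)).sum := by
    rw [← Fin.sum_univ_def, map_sum]
    exact (Finset.sum_comp_eq_sum_card_fiber_nsmul j y).symm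
  rw [hsum]
  exact list_prod_one_add_ι (fun k => Pi.single (j k) 1) (List.pairwise_lt_finRange M)
end

section
/- In the free associative algebra A = F⟨x,y⟩ over a commutative ring F, consider the multidegree-(m,1) component A[m,1], with basis {x^i y x^j : i + j = m}. Under the identification x^i y x^j ↦ z^i with polynomials in F[z] of degree at most m, bracketing with x^l (the map P ↦ [x^l, P̃] where P̃ is the element corresponding to P) corresponds to multiplication by (z^l - 1). Consequently, L_{i+1}(A)[m,1] corresponds to the set of polynomials of degree ≤ m divisible by (z-1)^i, and for F = Z, each quotient B_{i+1}(A)[m,1] = L_{i+1}(A)[m,1]/L_{i+2}(A)[m,1] is isomorphic to Z for 0 ≤ i ≤ m and 0 for i > m; in particular it is torsion-free. -/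
/-! Send `x ↦ diag(z, 1)` and `y ↦ E₀₁` into `2 × 2` matrices over `F[z]`. A word `x^i y x^j`
goes to `z^i E₀₁`, so the corner entry inverts `phi` on the `(m,1)`-component, and bracketing with
`x^l` multiplies it by `z^l - 1`. Every image is upper triangular with diagonal entries congruent
mod `z - 1`; bracketing such a matrix with the image of an element of `lcs k` therefore gains a
factor `z - 1` in the corner, so corners of `lcs k` are divisible by `(z - 1)^k`. Conversely,
`k` brackets with `x` produce every multiple of `(z - 1)^k`. Over `ℤ`, the coefficient of
`(z - 1)^i` in the corner is a functional on `lcs i ⊓ comp2 m` with kernel `lcs (i+1) ⊓ comp2 m`,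
onto `ℤ` when `i ≤ m`; for `m < i` the space vanishes, since a nonzero multiple of `(z - 1)^i`
has degree at least `i`. -/

/-- The lower central series: `lcs F A k = L_{k+1}(A)`, so `lcs F A 0 = L_1 = A` and
`lcs F A (k+1) = [A, lcs F A k]` (the `F`-span of commutators). -/
def lcs (F : Type*) [CommRing F] (A : Type*) [Ring A] [Algebra F A] : ℕ → Submodule F A
  | 0 => ⊤
  | k + 1 => Submodule.span F {u : A | ∃ a : A, ∃ l ∈ lcs F A k, u = a * l - l * a}

/-- The identification of `F[z]_{≤ m}` with the multidegree-`(m,1)` component of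
`F⟨x,y⟩`: `z^i ↦ x^i y x^{m-i}`. -/
noncomputable def phi (F : Type*) [CommRing F] (m : ℕ) (P : Polynomial F) :
    FreeAlgebra F (Fin 2) :=
  ∑ i ∈ Finset.range (m + 1),
    P.coeff i • ((FreeAlgebra.ι F (0 : Fin 2)) ^ i * FreeAlgebra.ι F (1 : Fin 2) *
      (FreeAlgebra.ι F (0 : Fin 2)) ^ (m - i))

/-- The multidegree-`(m,1)` component of `ℤ⟨x,y⟩`, spanned by `x^i y x^j`, `i+j = m`. -/
def comp2 (m : ℕ) : Submodule ℤ (FreeAlgebra ℤ (Fin 2)) :=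
  Submodule.span ℤ {u : FreeAlgebra ℤ (Fin 2) | ∃ i j : ℕ, i + j = m ∧
    u = (FreeAlgebra.ι ℤ (0 : Fin 2)) ^ i * FreeAlgebra.ι ℤ (1 : Fin 2) *
      (FreeAlgebra.ι ℤ (0 : Fin 2)) ^ j}

open Polynomial

theorem commutator_mem_lcs_succ (F : Type*) [CommRing F] {A : Type*} [Ring A] [Algebra F A]
    {k : ℕ} (a : A) {l : A} (hl : l ∈ lcs F A k) : a * l - l * a ∈ lcs F A (k + 1) :=
  Submodule.subset_span ⟨a, l, hl, rfl⟩

section TriangularFiltration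

variable {R : Type*} [CommRing R]

-- Commutators have equal diagonal entries, so for `k ≥ 1` the last condition is free; its
-- exponent `k + 1` makes `commutator_mem_triangularFiltration` uniform in `k`.
def triangularFiltration (t : R) (k : ℕ) : Submodule R (Matrix (Fin 2) (Fin 2) R) where
  carrier := {M | M 1 0 = 0 ∧ t ^ k ∣ M 0 1 ∧ t ^ (k + 1) ∣ M 0 0 - M 1 1}
  add_mem' := by
    rintro M N ⟨hM₁, hM₂, hM₃⟩ ⟨hN₁, hN₂, hN₃⟩
    refine ⟨by simp [hM₁, hN₁], by simpa using dvd_add hM₂ hN₂, ?_⟩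
    simpa [add_sub_add_comm] using dvd_add hM₃ hN₃
  zero_mem' := by simp
  smul_mem' := by
    rintro c M ⟨h₁, h₂, h₃⟩
    exact ⟨by simp [h₁], by simpa using h₂.mul_left c, by simpa [← mul_sub] using h₃.mul_left c⟩

variable {t : R} {M N : Matrix (Fin 2) (Fin 2) R}

theorem mul_mem_triangularFiltration_zero (hM : M ∈ triangularFiltration t 0)
    (hN : N ∈ triangularFiltration t 0) : M * N ∈ triangularFiltration t 0 := by
  obtain ⟨hM₁, -, hM₃⟩ := hM
  obtain ⟨hN₁, -, hN₃⟩ := hN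
  have hdiag : (M * N) 0 0 - (M * N) 1 1 = M 0 0 * (N 0 0 - N 1 1) + (M 0 0 - M 1 1) * N 1 1 := by
    simp only [Matrix.mul_apply, Fin.sum_univ_two, hM₁, hN₁]
    ring
  refine ⟨by simp [Matrix.mul_apply, hM₁, hN₁], by simp, ?_⟩
  rw [hdiag]
  exact dvd_add (hN₃.mul_left _) (hM₃.mul_right _)

theorem commutator_mem_triangularFiltration {k : ℕ} (hM : M ∈ triangularFiltration t 0)
    (hN : N ∈ triangularFiltration t k) : M * N - N * M ∈ triangularFiltration t (k + 1) := by
  obtain ⟨hM₁, -, hM₃⟩ := hM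
  obtain ⟨hN₁, hN₂, hN₃⟩ := hN
  have h01 : (M * N - N * M) 0 1 = N 0 1 * (M 0 0 - M 1 1) - M 0 1 * (N 0 0 - N 1 1) := by
    simp only [Matrix.sub_apply, Matrix.mul_apply, Fin.sum_univ_two]
    ring
  have hdiag : (M * N - N * M) 0 0 - (M * N - N * M) 1 1 = 0 := by
    simp only [Matrix.sub_apply, Matrix.mul_apply, Fin.sum_univ_two, hM₁, hN₁]
    ring
  refine ⟨by simp [Matrix.mul_apply, hM₁, hN₁], ?_, by rw [hdiag]; exact dvd_zero _⟩
  rw [h01]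
  refine dvd_sub ?_ (hN₃.mul_left _)
  rw [pow_succ]
  exact mul_dvd_mul hN₂ (by simpa using hM₃)

end TriangularFiltration

section Representation

variable (F : Type*) [CommRing F]

noncomputable def triangularRep : FreeAlgebra F (Fin 2) →ₐ[F] Matrix (Fin 2) (Fin 2) F[X] :=
  FreeAlgebra.lift F ![Matrix.diagonal ![X, 1], !![0, 1; 0, 0]]

theorem triangularRep_x_pow (k : ℕ) :
    triangularRep F (FreeAlgebra.ι F 0 ^ k) = Matrix.diagonal ![X ^ k, 1] := by
  rw [map_pow, triangularRep, FreeAlgebra.lift_ι_apply, Matrix.cons_val_zero,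
    Matrix.diagonal_pow]
  ext i j
  fin_cases i <;> fin_cases j <;> simp

theorem triangularRep_word (i j : ℕ) :
    triangularRep F (FreeAlgebra.ι F 0 ^ i * FreeAlgebra.ι F 1 * FreeAlgebra.ι F 0 ^ j) =
      !![0, X ^ i; 0, 0] := by
  rw [map_mul, map_mul, triangularRep_x_pow, triangularRep_x_pow, triangularRep,
    FreeAlgebra.lift_ι_apply]
  ext i j
  fin_cases i <;> fin_cases j <;> simp [Matrix.mul_apply]

theorem triangularRep_mem (a : FreeAlgebra F (Fin 2)) :
    triangularRep F a ∈ triangularFiltration (X - 1 : F[X]) 0 := by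
  induction a using FreeAlgebra.induction with
  | grade0 r => simp [triangularFiltration, Matrix.algebraMap_matrix_apply]
  | grade1 i => fin_cases i <;> simp [triangularRep, triangularFiltration]
  | mul a b ha hb => rw [map_mul]; exact mul_mem_triangularFiltration_zero ha hb
  | add a b ha hb => rw [map_add]; exact add_mem ha hb

theorem triangularRep_mem_of_mem_lcs :
    ∀ {k : ℕ} {a : FreeAlgebra F (Fin 2)}, a ∈ lcs F (FreeAlgebra F (Fin 2)) k →
      triangularRep F a ∈ triangularFiltration (X - 1 : F[X]) k
  | 0, a, _ => triangularRep_mem F a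
  | k + 1, a, ha => by
    have : lcs F (FreeAlgebra F (Fin 2)) (k + 1) ≤
        ((triangularFiltration (X - 1 : F[X]) (k + 1)).restrictScalars F).comap
          (triangularRep F).toLinearMap := by
      refine Submodule.span_le.2 ?_
      rintro _ ⟨b, l, hl, rfl⟩
      simpa using commutator_mem_triangularFiltration (triangularRep_mem F b)
        (triangularRep_mem_of_mem_lcs hl)
    exact this ha

end Representation

theorem Polynomial.linearMap_apply_eq_of_natDegree_le {R M : Type*} [CommRing R]
    [AddCommGroup M] [Module R M] {f g : R[X] →ₗ[R] M} {m : ℕ}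
    (h : ∀ k ≤ m, f (X ^ k) = g (X ^ k)) {P : R[X]} (hP : P.natDegree ≤ m) : f P = g P := by
  classical
  rw [natDegree_le_iff_degree_le, ← mem_degreeLE, degreeLE_eq_span_X_pow] at hP
  refine LinearMap.eqOn_span ?_ hP
  intro _ hX
  obtain ⟨k, hk, rfl⟩ := Finset.mem_image.1 hX
  exact h k (Nat.lt_succ_iff.1 (Finset.mem_range.1 hk))

section Phi

variable (F : Type*) [CommRing F]

noncomputable def phiₗ (m : ℕ) : F[X] →ₗ[F] FreeAlgebra F (Fin 2) where
  toFun := phi F m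
  map_add' P Q := by simp [phi, add_smul, Finset.sum_add_distrib]
  map_smul' c P := by simp [phi, Finset.smul_sum, smul_smul]

@[simp]
theorem phiₗ_apply (m : ℕ) (P : F[X]) : phiₗ F m P = phi F m P := rfl

theorem phi_zero (m : ℕ) : phi F m 0 = 0 := map_zero (phiₗ F m)

theorem phi_X_pow {m k : ℕ} (h : k ≤ m) :
    phi F m (X ^ k) =
      FreeAlgebra.ι F 0 ^ k * FreeAlgebra.ι F 1 * FreeAlgebra.ι F 0 ^ (m - k) := by
  rw [phi, Finset.sum_eq_single k]
  · simp
  · intro j _ hjk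
    simp [coeff_X_pow, hjk]
  · simp [h]

theorem commutator_x_pow_phi_X_pow (l : ℕ) {m k : ℕ} (h : k ≤ m) :
    FreeAlgebra.ι F 0 ^ l * phi F m (X ^ k) - phi F m (X ^ k) * FreeAlgebra.ι F 0 ^ l =
      phi F (m + l) ((X ^ l - 1) * X ^ k) := by
  rw [sub_one_mul, ← pow_add, ← phiₗ_apply F (m + l), map_sub, phiₗ_apply, phiₗ_apply,
    phi_X_pow F (by omega : l + k ≤ m + l), phi_X_pow F (by omega : k ≤ m + l), phi_X_pow F h,
    show m + l - (l + k) = m - k by omega, show m + l - k = m - k + l by omega, pow_add, pow_add]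
  noncomm_ring

theorem commutator_x_pow_phi (l : ℕ) {m : ℕ} {P : F[X]} (hP : P.natDegree ≤ m) :
    FreeAlgebra.ι F 0 ^ l * phi F m P - phi F m P * FreeAlgebra.ι F 0 ^ l =
      phi F (m + l) ((X ^ l - 1) * P) := by
  let x : FreeAlgebra F (Fin 2) := FreeAlgebra.ι F 0 ^ l
  have := Polynomial.linearMap_apply_eq_of_natDegree_le
    (f := (LinearMap.mulLeft F x - LinearMap.mulRight F x) ∘ₗ phiₗ F m)
    (g := phiₗ F (m + l) ∘ₗ LinearMap.mulLeft F (X ^ l - 1))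
    (fun k hk => by simpa using commutator_x_pow_phi_X_pow F l hk) hP
  simpa using this

end Phi

theorem isMonicOfDegree_X_sub_one_pow (R : Type*) [CommRing R] [Nontrivial R] (i : ℕ) :
    IsMonicOfDegree ((X - 1 : R[X]) ^ i) i := by
  simpa using (isMonicOfDegree_X_sub_one (1 : R)).pow i

section LowerCentralSeries

variable (F : Type*) [CommRing F]

noncomputable def yCoeff : FreeAlgebra F (Fin 2) →ₗ[F] F[X] :=
  Matrix.entryLinearMap F F[X] 0 1 ∘ₗ (triangularRep F).toLinearMap

theorem yCoeff_phi {m : ℕ} {P : F[X]} (hP : P.natDegree ≤ m) : yCoeff F (phi F m P) = P :=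
  Polynomial.linearMap_apply_eq_of_natDegree_le (f := yCoeff F ∘ₗ phiₗ F m) (g := LinearMap.id)
    (fun k hk => by simp [yCoeff, phi_X_pow F hk, triangularRep_word]) hP

theorem X_sub_one_pow_dvd_yCoeff_of_mem_lcs {k : ℕ} {a : FreeAlgebra F (Fin 2)}
    (ha : a ∈ lcs F (FreeAlgebra F (Fin 2)) k) : (X - 1) ^ k ∣ yCoeff F a :=
  (triangularRep_mem_of_mem_lcs F ha).2.1

theorem phi_X_sub_one_pow_mul_mem_lcs : ∀ (i : ℕ) {n : ℕ} {Q : F[X]}, Q.natDegree ≤ n →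
    phi F (n + i) ((X - 1) ^ i * Q) ∈ lcs F (FreeAlgebra F (Fin 2)) i
  | 0, _, _, _ => Submodule.mem_top
  | i + 1, n, Q, hQ => by
    have hdeg : ((X - 1 : F[X]) ^ i * Q).natDegree ≤ n + i := by
      have := natDegree_pow_le_of_le i (natDegree_X_sub_C_le (1 : F))
      simp only [map_one, mul_one] at this
      exact natDegree_mul_le.trans (by omega)
    have h := commutator_x_pow_phi F 1 hdeg
    rw [pow_one, pow_one, ← mul_assoc, ← pow_succ'] at h
    rw [← add_assoc, ← h]
    exact commutator_mem_lcs_succ F _ (phi_X_sub_one_pow_mul_mem_lcs i hQ)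

theorem phi_mem_lcs_iff {i m : ℕ} {P : F[X]} (hP : P.natDegree ≤ m) :
    phi F m P ∈ lcs F (FreeAlgebra F (Fin 2)) i ↔ (X - 1) ^ i ∣ P := by
  refine ⟨fun h => yCoeff_phi F hP ▸ X_sub_one_pow_dvd_yCoeff_of_mem_lcs F h, ?_⟩
  rintro ⟨Q, rfl⟩
  rcases eq_or_ne Q 0 with rfl | hQ
  · simp [phi_zero]
  have := Polynomial.nontrivial_iff.1 (nontrivial_of_ne Q 0 hQ)
  have hX := isMonicOfDegree_X_sub_one_pow F i
  have hdeg := hX.monic.natDegree_mul' hQ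
  rw [hX.natDegree_eq] at hdeg
  obtain ⟨n, rfl⟩ : ∃ n, m = n + i := ⟨m - i, by omega⟩
  exact phi_X_sub_one_pow_mul_mem_lcs F i (by omega)

end LowerCentralSeries

theorem Polynomial.X_sub_C_pow_succ_dvd_iff {R : Type*} [CommRing R] {r : R} {n : ℕ} {p : R[X]}
    (h : (X - C r) ^ n ∣ p) : (X - C r) ^ (n + 1) ∣ p ↔ (taylor r p).coeff n = 0 := by
  rw [X_sub_C_pow_dvd_iff, ← taylor_apply, X_pow_dvd_iff] at h ⊢
  rw [Nat.forall_lt_succ_right]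
  exact and_iff_right h

theorem comp2_eq_map_degreeLE (m : ℕ) : comp2 m = (degreeLE ℤ m).map (phiₗ ℤ m) := by
  classical
  rw [degreeLE_eq_span_X_pow, Submodule.map_span, comp2]
  congr 1
  ext u
  simp only [Set.mem_ofPred_eq, Finset.coe_image, Set.image_image, Set.mem_image, Finset.mem_coe,
    Finset.mem_range, phiₗ_apply]
  constructor
  · rintro ⟨i, j, hij, rfl⟩
    exact ⟨i, by omega, by rw [phi_X_pow ℤ (by omega : i ≤ m), show m - i = j by omega]⟩
  · rintro ⟨k, hk, rfl⟩
    exact ⟨k, m - k, by omega, phi_X_pow ℤ (by omega)⟩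

theorem mem_comp2_iff {m : ℕ} {a : FreeAlgebra ℤ (Fin 2)} :
    a ∈ comp2 m ↔ ∃ P : ℤ[X], P.natDegree ≤ m ∧ phi ℤ m P = a := by
  -- `comp2` uses the `ℤ`-module structure of an additive group, `phiₗ` that of an algebra.
  have : a ∈ comp2 m ↔ a ∈ (degreeLE ℤ m).map (phiₗ ℤ m) := by
    rw [comp2_eq_map_degreeLE]; rfl
  rw [this, Submodule.mem_map]
  simp only [mem_degreeLE, phiₗ_apply, natDegree_le_iff_degree_le]

noncomputable def taylorCoeffAtOne (F : Type*) [CommRing F] (i : ℕ) :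
    FreeAlgebra F (Fin 2) →ₗ[F] F :=
  lcoeff F i ∘ₗ taylor 1 ∘ₗ yCoeff F

theorem taylorCoeffAtOne_phi {F : Type*} [CommRing F] {i m : ℕ} {P : F[X]}
    (hP : P.natDegree ≤ m) : taylorCoeffAtOne F i (phi F m P) = (taylor 1 P).coeff i := by
  simp [taylorCoeffAtOne, yCoeff_phi F hP]

abbrev lcsComp (i m : ℕ) : Submodule ℤ (FreeAlgebra ℤ (Fin 2)) :=
  lcs ℤ (FreeAlgebra ℤ (Fin 2)) i ⊓ comp2 m

theorem phi_mem_lcsComp_iff {i m : ℕ} {P : ℤ[X]} (hP : P.natDegree ≤ m) :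
    phi ℤ m P ∈ lcsComp i m ↔ (X - 1) ^ i ∣ P :=
  ⟨fun h => (phi_mem_lcs_iff ℤ hP).1 h.1,
    fun h => ⟨(phi_mem_lcs_iff ℤ hP).2 h, mem_comp2_iff.2 ⟨P, hP, rfl⟩⟩⟩

theorem exists_phi_of_mem_lcsComp {i m : ℕ} {a : FreeAlgebra ℤ (Fin 2)} (ha : a ∈ lcsComp i m) :
    ∃ P : ℤ[X], P.natDegree ≤ m ∧ (X - 1) ^ i ∣ P ∧ phi ℤ m P = a := by
  obtain ⟨P, hP, rfl⟩ := mem_comp2_iff.1 ha.2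
  exact ⟨P, hP, (phi_mem_lcsComp_iff hP).1 ha, rfl⟩

noncomputable def lcsCompFunctional (i m : ℕ) : lcsComp i m →ₗ[ℤ] ℤ :=
  taylorCoeffAtOne ℤ i ∘ₗ (lcsComp i m).subtype

theorem ker_lcsCompFunctional (i m : ℕ) :
    LinearMap.ker (lcsCompFunctional i m) = (lcsComp (i + 1) m).comap (lcsComp i m).subtype := by
  ext ⟨a, ha⟩
  obtain ⟨P, hP, hdvd, rfl⟩ := exists_phi_of_mem_lcsComp ha
  change taylorCoeffAtOne ℤ i (phi ℤ m P) = 0 ↔ phi ℤ m P ∈ lcsComp (i + 1) m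
  rw [taylorCoeffAtOne_phi hP, phi_mem_lcsComp_iff hP]
  simpa using (X_sub_C_pow_succ_dvd_iff (r := (1 : ℤ)) (by simpa using hdvd)).symm

theorem surjective_lcsCompFunctional {i m : ℕ} (h : i ≤ m) :
    Function.Surjective (lcsCompFunctional i m) := by
  have hdeg : ((X - 1 : ℤ[X]) ^ i).natDegree ≤ m :=
    (isMonicOfDegree_X_sub_one_pow ℤ i).natDegree_eq.trans_le h
  let e : lcsComp i m := ⟨phi ℤ m ((X - 1) ^ i), (phi_mem_lcsComp_iff hdeg).2 dvd_rfl⟩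
  have he : lcsCompFunctional i m e = 1 := by
    change taylorCoeffAtOne ℤ i (phi ℤ m _) = 1
    simp [taylorCoeffAtOne_phi hdeg, taylor_pow]
  exact fun c => ⟨c • e, by rw [map_smul, he, smul_eq_mul, mul_one]⟩

theorem lcsComp_eq_bot {i m : ℕ} (h : m < i) : lcsComp i m = ⊥ := by
  refine (Submodule.eq_bot_iff _).2 fun a ha => ?_
  obtain ⟨P, hP, hdvd, rfl⟩ := exists_phi_of_mem_lcsComp ha
  obtain rfl : P = 0 := by
    by_contra hP0
    have := natDegree_le_of_dvd hdvd hP0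
    rw [(isMonicOfDegree_X_sub_one_pow ℤ i).natDegree_eq] at this
    omega
  exact phi_zero ℤ m

abbrev lcsQuot (i m : ℕ) : Type :=
  lcsComp i m ⧸ (lcsComp (i + 1) m).comap (lcsComp i m).subtype

noncomputable def lcsQuotEquivRange (i m : ℕ) :
    lcsQuot i m ≃ₗ[ℤ] LinearMap.range (lcsCompFunctional i m) :=
  (Submodule.quotEquivOfEq _ _ (ker_lcsCompFunctional i m).symm).trans
    (LinearMap.quotKerEquivRange _)

theorem lcsQuot_eq_zero_of_smul_eq_zero {i m : ℕ} {q : lcsQuot i m} {c : ℤ} (h : c • q = 0) :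
    c = 0 ∨ q = 0 := by
  have : c • lcsQuotEquivRange i m q = 0 := by rw [← map_smul, h, map_zero]
  exact (smul_eq_zero.1 this).imp_right (LinearEquiv.map_eq_zero_iff _).1

theorem subsingleton_lcsQuot {i m : ℕ} (h : m < i) : Subsingleton (lcsQuot i m) :=
  Submodule.Quotient.subsingleton_iff.2 <|
    Submodule.comap_subtype_eq_top.2 (by rw [lcsComp_eq_bot h]; exact bot_le)

/-- In `A = F⟨x,y⟩`: (a) under the identification `x^i y x^j ↦ z^i` of the `(m,1)`-component
with polynomials of degree `≤ m`, bracketing with `x^l` corresponds to multiplication by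
`z^l - 1`; (b) `L_{i+1}(A)[m,1]` corresponds to the polynomials of degree `≤ m` divisible by
`(z-1)^i`; (c) for `F = ℤ`, `B_{i+1}(A)[m,1] = L_{i+1}[m,1]/L_{i+2}[m,1]` is isomorphic to
`ℤ` for `0 ≤ i ≤ m`, is `0` for `i > m`, and in particular is torsion-free. -/
theorem stmt14 (F : Type*) [CommRing F] :
    (∀ (l m : ℕ) (P : Polynomial F), P.natDegree ≤ m →
      FreeAlgebra.ι F (0 : Fin 2) ^ l * phi F m P - phi F m P * FreeAlgebra.ι F (0 : Fin 2) ^ l =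
        phi F (m + l) ((Polynomial.X ^ l - 1) * P)) ∧
    (∀ (i m : ℕ) (P : Polynomial F), P.natDegree ≤ m →
      (phi F m P ∈ lcs F (FreeAlgebra F (Fin 2)) i ↔ (Polynomial.X - 1) ^ i ∣ P)) ∧
    (∀ i m : ℕ,
      (i ≤ m →
        Nonempty
          ((↥(lcs ℤ (FreeAlgebra ℤ (Fin 2)) i ⊓ comp2 m) ⧸
              Submodule.comap (lcs ℤ (FreeAlgebra ℤ (Fin 2)) i ⊓ comp2 m).subtype
                (lcs ℤ (FreeAlgebra ℤ (Fin 2)) (i + 1) ⊓ comp2 m)) ≃+ ℤ)) ∧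
      (m < i →
        Subsingleton
          (↥(lcs ℤ (FreeAlgebra ℤ (Fin 2)) i ⊓ comp2 m) ⧸
            Submodule.comap (lcs ℤ (FreeAlgebra ℤ (Fin 2)) i ⊓ comp2 m).subtype
              (lcs ℤ (FreeAlgebra ℤ (Fin 2)) (i + 1) ⊓ comp2 m))) ∧
      (∀ (q : ↥(lcs ℤ (FreeAlgebra ℤ (Fin 2)) i ⊓ comp2 m) ⧸
            Submodule.comap (lcs ℤ (FreeAlgebra ℤ (Fin 2)) i ⊓ comp2 m).subtype
              (lcs ℤ (FreeAlgebra ℤ (Fin 2)) (i + 1) ⊓ comp2 m)) (c : ℤ),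
        c • q = 0 → c = 0 ∨ q = 0)) := by
  refine ⟨fun l m P hP => commutator_x_pow_phi F l hP, fun i m P hP => phi_mem_lcs_iff F hP,
    fun i m => ⟨fun h => ?_, subsingleton_lcsQuot, fun q c => lcsQuot_eq_zero_of_smul_eq_zero⟩⟩
  have hrange := LinearMap.range_eq_top.2 (surjective_lcsCompFunctional h)
  exact ⟨((lcsQuotEquivRange i m).trans (LinearEquiv.ofTop _ hrange)).toAddEquiv⟩
end

section
/- Let A = F⟨x_1, ..., x_n⟩ be the free associative algebra over a field F, with lower central series L_1 = A, L_{i+1} = [A, L_i]. If for some r, L_i = [A_{≤r}, L_{i-1}] where A_{≤r} is the span of words of degree at most r, then L_{i+1} = [A_{≤ 2r+1}, L_i]. Consequently, by induction, L_{i+1} = [A_{≤ 2^i - 1}, L_i] for all i ≥ 1. -/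
/-- `[S, T]`: the span of commutators `[s,t]` with `s ∈ S`, `t ∈ T`. -/
def brk (F : Type*) [CommRing F] (A : Type*) [Ring A] [Algebra F A]
    (S T : Submodule F A) : Submodule F A :=
  Submodule.span F {u : A | ∃ s ∈ S, ∃ t ∈ T, u = s * t - t * s}

/-- `A_{≤r}`: the span of monomials of degree at most `r` in the free algebra. -/
def Adeg (F : Type*) [Field F] (n r : ℕ) : Submodule F (FreeAlgebra F (Fin n)) :=
  Submodule.span F {u : FreeAlgebra F (Fin n) | ∃ w : List (Fin n), w.length ≤ r ∧
    u = (w.map (FreeAlgebra.ι F)).prod}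

/-!
Expanding both arguments of `L_{i+2} = [A, L_{i+1}] = [A, [A_{≤r}, L_i]]` in monomials, it
suffices to show `[w, [c, d]] ∈ [A_{≤2r+1}, L_{i+1}]` for words `w`, `c` with `|c| ≤ r` and
`d ∈ L_i`. When `|w| > 2r+1`, write `w = ab` with `|a| = r+1`; the identity
`[ab,[c,d]] = [c,[ab,d]] + [a,[bc,d]] + [b,[ca,d]] - [ca,[b,d]] - [bc,[a,d]]`
rewrites it through brackets whose outer argument has degree at most `2r+1` (namely `c`, `a`,
`ca`) or is a word shorter than `w` (namely `b`, `bc`), so induction on `|w|` concludes.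
The base case `L_2 = [A_{≤1}, A]` comes from `[xy, t] = [x, yt] + [y, tx]`.
-/

open Submodule

section RingIdentities

variable {R : Type*} [Ring R]

theorem mul_lie_eq_lie_add_lie (x y t : R) :
    ⁅x * y, t⁆ = ⁅x, y * t⁆ + ⁅y, t * x⁆ := by
  simp only [Ring.lie_def]
  noncomm_ring

/-- The Jacobi identity combined with `[ab, c] + [bc, a] + [ca, b] = 0`. -/
theorem lie_mul_lie_cyclic (a b c d : R) :
    ⁅a * b, ⁅c, d⁆⁆ + ⁅b * c, ⁅a, d⁆⁆ + ⁅c * a, ⁅b, d⁆⁆ =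
      ⁅c, ⁅a * b, d⁆⁆ + ⁅a, ⁅b * c, d⁆⁆ + ⁅b, ⁅c * a, d⁆⁆ := by
  simp only [Ring.lie_def]
  noncomm_ring

end RingIdentities

section Commutators

variable {F : Type*} [CommRing F] {A : Type*} [Ring A] [Algebra F A]

theorem brk_eq_map₂ (S T : Submodule F A) :
    brk F A S T = map₂ (LinearMap.mul F A - (LinearMap.mul F A).flip) S T := by
  rw [map₂_eq_span_image2, brk]
  congr 1
  ext u
  simp [Set.mem_image2, eq_comm]

theorem brk_le_iff {S T M : Submodule F A} :
    brk F A S T ≤ M ↔ ∀ s ∈ S, ∀ t ∈ T, ⁅s, t⁆ ∈ M := by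
  rw [brk_eq_map₂, map₂_le]
  simp [Ring.lie_def]

theorem lie_mem_brk {S T : Submodule F A} {s t : A} (hs : s ∈ S) (ht : t ∈ T) :
    ⁅s, t⁆ ∈ brk F A S T :=
  brk_le_iff.1 le_rfl s hs t ht

theorem brk_span_span (S T : Set A) :
    brk F A (span F S) (span F T) = span F (Set.image2 (fun s t ↦ ⁅s, t⁆) S T) := by
  rw [brk_eq_map₂, map₂_span_span]
  simp [Ring.lie_def]

theorem lcs_succ_eq_brk_top (k : ℕ) : lcs F A (k + 1) = brk F A ⊤ (lcs F A k) := by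
  rw [lcs, brk]
  simp

theorem lie_mem_lcs_succ (a : A) {k : ℕ} {l : A} (hl : l ∈ lcs F A k) :
    ⁅a, l⁆ ∈ lcs F A (k + 1) := by
  rw [lcs_succ_eq_brk_top]
  exact lie_mem_brk mem_top hl

theorem brk_le_lcs_succ (S : Submodule F A) (k : ℕ) : brk F A S (lcs F A k) ≤ lcs F A (k + 1) :=
  brk_le_iff.2 fun s _ _ hl ↦ lie_mem_lcs_succ s hl

theorem brk_span_span_le_iff {S T : Set A} {M : Submodule F A} :
    brk F A (span F S) (span F T) ≤ M ↔ ∀ s ∈ S, ∀ t ∈ T, ⁅s, t⁆ ∈ M := by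
  simp [brk_span_span, span_le, Set.image2_subset_iff]

theorem brk_span_le_iff {S : Set A} {T M : Submodule F A} :
    brk F A (span F S) T ≤ M ↔ ∀ s ∈ S, ∀ t ∈ T, ⁅s, t⁆ ∈ M := by
  rw [← span_eq T, brk_span_span_le_iff, span_eq]
  rfl

theorem lie_mem_of_mem_span_right {a t : A} {T : Set A} {M : Submodule F A}
    (ht : t ∈ span F T) (h : ∀ t' ∈ T, ⁅a, t'⁆ ∈ M) : ⁅a, t⁆ ∈ M :=
  brk_span_span_le_iff (S := {a}).2 (by simpa using h)
    (lie_mem_brk (mem_span_singleton_self a) ht)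

end Commutators

section FreeAlgebra

variable (R : Type*) [CommRing R] {X : Type*}

def freeMonomial (w : List X) : FreeAlgebra R X := (w.map (FreeAlgebra.ι R)).prod

variable {R}

@[simp]
theorem freeMonomial_nil : freeMonomial R ([] : List X) = 1 := rfl

@[simp]
theorem freeMonomial_cons (x : X) (w : List X) :
    freeMonomial R (x :: w) = FreeAlgebra.ι R x * freeMonomial R w := by
  simp [freeMonomial]

theorem freeMonomial_append (w₁ w₂ : List X) :
    freeMonomial R (w₁ ++ w₂) = freeMonomial R w₁ * freeMonomial R w₂ := by
  simp [freeMonomial]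

theorem span_range_freeMonomial : span R (Set.range (freeMonomial R (X := X))) = ⊤ := by
  refine eq_top_iff'.2 fun x ↦ ?_
  induction x using FreeAlgebra.induction with
  | grade0 c =>
    rw [Algebra.algebraMap_eq_smul_one, ← freeMonomial_nil]
    exact smul_mem _ c (subset_span ⟨[], rfl⟩)
  | grade1 x =>
    have hx : freeMonomial R [x] ∈ span R (Set.range (freeMonomial R)) :=
      subset_span ⟨[x], rfl⟩
    simpa using hx
  | mul a b ha hb =>
    have hab := mul_mem_mul ha hb
    rw [span_mul_span] at hab
    refine span_mono ?_ hab
    rintro _ ⟨_, ⟨w₁, rfl⟩, _, ⟨w₂, rfl⟩, rfl⟩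
    exact ⟨w₁ ++ w₂, freeMonomial_append w₁ w₂⟩
  | add a b ha hb => exact add_mem ha hb

end FreeAlgebra

section LowerCentralSeries

variable {F : Type*} [Field F] {n : ℕ}

local notation "A" => FreeAlgebra F (Fin n)

theorem Adeg_eq_span_freeMonomial (r : ℕ) :
    Adeg F n r = span F (freeMonomial F '' {w | w.length ≤ r}) := by
  rw [Adeg]
  congr 1
  ext
  simp [freeMonomial, eq_comm]

theorem freeMonomial_mem_Adeg {w : List (Fin n)} {r : ℕ} (h : w.length ≤ r) :
    freeMonomial F w ∈ Adeg F n r := by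
  rw [Adeg_eq_span_freeMonomial]
  exact subset_span ⟨w, h, rfl⟩

theorem lie_freeMonomial_mem_brk_Adeg_one (w : List (Fin n)) (t : A) :
    ⁅freeMonomial F w, t⁆ ∈ brk F A (Adeg F n 1) ⊤ := by
  induction w generalizing t with
  | nil => simp [Ring.lie_def]
  | cons x w ih =>
    rw [freeMonomial_cons, mul_lie_eq_lie_add_lie]
    refine add_mem (lie_mem_brk ?_ mem_top) (ih _)
    simpa using freeMonomial_mem_Adeg (F := F) (w := [x]) le_rfl

theorem lcs_one_eq_brk_Adeg_one : lcs F A 1 = brk F A (Adeg F n 1) (lcs F A 0) := by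
  refine le_antisymm ?_ (brk_le_lcs_succ _ 0)
  rw [lcs_succ_eq_brk_top, ← span_range_freeMonomial, brk_span_le_iff]
  rintro _ ⟨w, rfl⟩ t -
  exact lie_freeMonomial_mem_brk_Adeg_one w t

variable {i r : ℕ}

theorem lie_freeMonomial_mem_brk_of_eq
    (H : lcs F A (i + 1) = brk F A (Adeg F n r) (lcs F A i)) (w : List (Fin n)) {t : A}
    (ht : t ∈ lcs F A (i + 1)) :
    ⁅freeMonomial F w, t⁆ ∈ brk F A (Adeg F n (2 * r + 1)) (lcs F A (i + 1)) := by
  by_cases hshort : w.length ≤ 2 * r + 1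
  · exact lie_mem_brk (freeMonomial_mem_Adeg hshort) ht
  rw [H, ← span_eq (lcs F A i), Adeg_eq_span_freeMonomial, brk_span_span] at ht
  refine lie_mem_of_mem_span_right ht ?_
  rintro _ ⟨_, ⟨v, hv, rfl⟩, d, hd, rfl⟩
  replace hv : v.length ≤ r := hv
  have hw : freeMonomial F w =
      freeMonomial F (w.take (r + 1)) * freeMonomial F (w.drop (r + 1)) := by
    rw [← freeMonomial_append, List.take_append_drop]
  have hlen_take : (w.take (r + 1)).length = r + 1 := by simp; omega
  rw [hw, eq_sub_of_add_eq (eq_sub_of_add_eq (lie_mul_lie_cyclic (freeMonomial F (w.take (r + 1)))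
    (freeMonomial F (w.drop (r + 1))) (freeMonomial F v) d))]
  refine sub_mem (sub_mem (add_mem (add_mem ?_ ?_) ?_) ?_) ?_
  · exact lie_mem_brk (freeMonomial_mem_Adeg (by omega)) (lie_mem_lcs_succ _ hd)
  · exact lie_mem_brk (freeMonomial_mem_Adeg (by omega)) (lie_mem_lcs_succ _ hd)
  · exact lie_freeMonomial_mem_brk_of_eq H (w.drop (r + 1)) (lie_mem_lcs_succ _ hd)
  · rw [← freeMonomial_append]
    exact lie_mem_brk (freeMonomial_mem_Adeg (by simp; omega)) (lie_mem_lcs_succ _ hd)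
  · rw [← freeMonomial_append]
    exact lie_freeMonomial_mem_brk_of_eq H _ (lie_mem_lcs_succ _ hd)
termination_by w.length
decreasing_by all_goals simp only [List.length_append, List.length_drop]; omega

theorem lcs_add_two_eq_brk_of_eq (H : lcs F A (i + 1) = brk F A (Adeg F n r) (lcs F A i)) :
    lcs F A (i + 2) = brk F A (Adeg F n (2 * r + 1)) (lcs F A (i + 1)) := by
  refine le_antisymm ?_ (brk_le_lcs_succ _ _)
  rw [lcs_succ_eq_brk_top, ← span_range_freeMonomial, brk_span_le_iff]
  rintro _ ⟨w, rfl⟩ t ht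
  exact lie_freeMonomial_mem_brk_of_eq H w ht

end LowerCentralSeries

/-- In the free algebra `A = F⟨x_1,...,x_n⟩` over a field: if `L_i = [A_{≤r}, L_{i-1}]`
then `L_{i+1} = [A_{≤2r+1}, L_i]`; consequently, by induction,
`L_{i+1} = [A_{≤2^i - 1}, L_i]` for all `i ≥ 1`.  (Here `lcs F _ k = L_{k+1}`.) -/
theorem stmt18 (F : Type*) [Field F] (n : ℕ) :
    (∀ i r : ℕ,
      lcs F (FreeAlgebra F (Fin n)) (i + 1) =
        brk F (FreeAlgebra F (Fin n)) (Adeg F n r) (lcs F (FreeAlgebra F (Fin n)) i) →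
      lcs F (FreeAlgebra F (Fin n)) (i + 2) =
        brk F (FreeAlgebra F (Fin n)) (Adeg F n (2 * r + 1))
          (lcs F (FreeAlgebra F (Fin n)) (i + 1))) ∧
    (∀ i : ℕ,
      lcs F (FreeAlgebra F (Fin n)) (i + 1) =
        brk F (FreeAlgebra F (Fin n)) (Adeg F n (2 ^ (i + 1) - 1))
          (lcs F (FreeAlgebra F (Fin n)) i)) := by
  refine ⟨fun i r ↦ lcs_add_two_eq_brk_of_eq, fun i ↦ ?_⟩
  induction i with
  | zero => exact lcs_one_eq_brk_Adeg_one
  | succ i ih =>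
    have hdeg : 2 * (2 ^ (i + 1) - 1) + 1 = 2 ^ (i + 2) - 1 := by
      have := Nat.one_le_two_pow (n := i + 1)
      rw [pow_succ 2 (i + 1)]
      omega
    rw [← hdeg]
    exact lcs_add_two_eq_brk_of_eq ih
end
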